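/- The Winskel parallel composition of labelled transition systems via a synchronization algebra is associative up to isomorphism: (A ∥ B) ∥ C ≅ A ∥ (B ∥ C), via the canonical bijection of state triples. -/
import Mathlib


/-- Winskel's parallel composition of transition systems via a synchronization
algebra `d` on `α = L ∪ {ε, 0}`: a transition `((a,b), λ, (a',b'))` whenever
`λ = α ⋄ β ≠ 0` for component transitions `(a,α,a')`, `(b,β,b')`, where one (but not
both) of the components may idle with label `ε`. -/
def winskelPar {α S₁ S₂ : Type} (eps zero : α) (d : α → α → α)
    (T₁ : Set (S₁ × α × S₁)) (T₂ : Set (S₂ × α × S₂)) :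
    Set ((S₁ × S₂) × α × (S₁ × S₂)) :=
  {p | ∃ a b : α, p.2.1 = d a b ∧ d a b ≠ zero ∧
    (((p.1.1, a, p.2.2.1) ∈ T₁ ∧ (p.1.2, b, p.2.2.2) ∈ T₂) ∨
     ((p.1.1, a, p.2.2.1) ∈ T₁ ∧ b = eps ∧ p.2.2.2 = p.1.2) ∨
     (a = eps ∧ p.2.2.1 = p.1.1 ∧ (p.1.2, b, p.2.2.2) ∈ T₂))}

section Aux

variable {α S₁ S₂ : Type} {eps zero : α} {d : α → α → α}

lemma mem_winskelPar_iff
    (heps : ∀ a b, d a b = eps ↔ a = eps ∧ b = eps)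
    {T₁ : Set (S₁ × α × S₁)} {T₂ : Set (S₂ × α × S₂)}
    (hT₁ : ∀ p ∈ T₁, p.2.1 ≠ eps) (hT₂ : ∀ p ∈ T₂, p.2.1 ≠ eps)
    (s₁ s₁' : S₁) (s₂ s₂' : S₂) (lam : α) :
    (((s₁, s₂), lam, (s₁', s₂')) ∈ winskelPar eps zero d T₁ T₂) ↔
      lam ≠ eps ∧ ∃ a b, lam = d a b ∧ d a b ≠ zero ∧
        ((s₁, a, s₁') ∈ T₁ ∨ (a = eps ∧ s₁' = s₁)) ∧
        ((s₂, b, s₂') ∈ T₂ ∨ (b = eps ∧ s₂' = s₂)) := by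
  constructor
  · rintro ⟨a, b, hlam, hnz, hcase⟩
    dsimp only at hlam hcase
    have hne' : lam ≠ eps := by
      intro h
      rw [hlam] at h
      obtain ⟨rfl, rfl⟩ := (heps a b).mp h
      rcases hcase with ⟨h1, _⟩ | ⟨h1, _, _⟩ | ⟨_, _, h2⟩
      · exact hT₁ _ h1 rfl
      · exact hT₁ _ h1 rfl
      · exact hT₂ _ h2 rfl
    refine ⟨hne', a, b, hlam, hnz, ?_, ?_⟩ <;> tauto
  · rintro ⟨hne', a, b, hlam, hnz, hA, hB⟩
    refine ⟨a, b, hlam, hnz, ?_⟩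
    rcases hA with hA | ⟨rfl, rfl⟩ <;> rcases hB with hB | ⟨rfl, rfl⟩
    · exact Or.inl ⟨hA, hB⟩
    · exact Or.inr (Or.inl ⟨hA, rfl, rfl⟩)
    · exact Or.inr (Or.inr ⟨rfl, rfl, hB⟩)
    · exact absurd (hlam.trans ((heps _ _).mpr ⟨rfl, rfl⟩)) hne'

lemma winskelPar_labels
    (heps : ∀ a b, d a b = eps ↔ a = eps ∧ b = eps)
    {T₁ : Set (S₁ × α × S₁)} {T₂ : Set (S₂ × α × S₂)}
    (hT₁ : ∀ p ∈ T₁, p.2.1 ≠ eps) (hT₂ : ∀ p ∈ T₂, p.2.1 ≠ eps) :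
    ∀ p ∈ winskelPar eps zero d T₁ T₂, p.2.1 ≠ eps ∧ p.2.1 ≠ zero := by
  rintro p ⟨a, b, hlam, hnz, hcase⟩
  refine ⟨?_, hlam ▸ hnz⟩
  intro h
  rw [hlam] at h
  obtain ⟨rfl, rfl⟩ := (heps a b).mp h
  rcases hcase with ⟨h1, _⟩ | ⟨h1, _, _⟩ | ⟨_, _, h2⟩
  · exact hT₁ _ h1 rfl
  · exact hT₁ _ h1 rfl
  · exact hT₂ _ h2 rfl

lemma pair_mem_iff
    (hne : eps ≠ zero)
    (heps : ∀ a b, d a b = eps ↔ a = eps ∧ b = eps)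
    {T₁ : Set (S₁ × α × S₁)} {T₂ : Set (S₂ × α × S₂)}
    (hT₁ : ∀ p ∈ T₁, p.2.1 ≠ eps) (hT₂ : ∀ p ∈ T₂, p.2.1 ≠ eps)
    (s₁ s₁' : S₁) (s₂ s₂' : S₂) (ab : α) :
    ((((s₁, s₂), ab, (s₁', s₂')) ∈ winskelPar eps zero d T₁ T₂) ∨
        (ab = eps ∧ (s₁', s₂') = (s₁, s₂))) ↔
      ∃ a b, ab = d a b ∧ d a b ≠ zero ∧
        ((s₁, a, s₁') ∈ T₁ ∨ (a = eps ∧ s₁' = s₁)) ∧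
        ((s₂, b, s₂') ∈ T₂ ∨ (b = eps ∧ s₂' = s₂)) := by
  constructor
  · rintro (hm | ⟨hab, hid⟩)
    · obtain ⟨_, a, b, h⟩ := (mem_winskelPar_iff heps hT₁ hT₂ s₁ s₁' s₂ s₂' ab).mp hm
      exact ⟨a, b, h⟩
    · have h1 : s₁' = s₁ := congrArg Prod.fst hid
      have h2 : s₂' = s₂ := congrArg Prod.snd hid
      have he : d eps eps = eps := (heps eps eps).mpr ⟨rfl, rfl⟩
      exact ⟨eps, eps, hab.trans he.symm, by rw [he]; exact hne,
        Or.inr ⟨rfl, h1⟩, Or.inr ⟨rfl, h2⟩⟩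
  · rintro ⟨a, b, hlam, hnz, hA, hB⟩
    by_cases h : ab = eps
    · subst h
      obtain ⟨rfl, rfl⟩ := (heps a b).mp hlam.symm
      refine Or.inr ⟨rfl, ?_⟩
      rcases hA with hA | ⟨_, rfl⟩
      · exact absurd rfl (hT₁ _ hA)
      rcases hB with hB | ⟨_, rfl⟩
      · exact absurd rfl (hT₂ _ hB)
      rfl
    · exact Or.inl ((mem_winskelPar_iff heps hT₁ hT₂ s₁ s₁' s₂ s₂' ab).mpr
        ⟨h, a, b, hlam, hnz, hA, hB⟩)

end Aux

/-- Winskel's parallel composition of labelled transition systems via a synchronization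
algebra is associative up to isomorphism, via the canonical bijection of state triples:
`(A ∥ B) ∥ C ≅ A ∥ (B ∥ C)`. -/
theorem winskelPar_assoc {α S₁ S₂ S₃ : Type} (eps zero : α) (hne : eps ≠ zero)
    (d : α → α → α)
    (hcomm : ∀ a b, d a b = d b a)
    (hassoc : ∀ a b c, d (d a b) c = d a (d b c))
    (hzero : ∀ a, d a zero = zero)
    (heps : ∀ a b, d a b = eps ↔ a = eps ∧ b = eps)
    (T₁ : Set (S₁ × α × S₁)) (T₂ : Set (S₂ × α × S₂)) (T₃ : Set (S₃ × α × S₃))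
    -- transition labels lie in the alphabet L (they are neither ε nor 0)
    (hT₁ : ∀ p ∈ T₁, p.2.1 ≠ eps ∧ p.2.1 ≠ zero)
    (hT₂ : ∀ p ∈ T₂, p.2.1 ≠ eps ∧ p.2.1 ≠ zero)
    (hT₃ : ∀ p ∈ T₃, p.2.1 ≠ eps ∧ p.2.1 ≠ zero) :
    ∀ (s₁ : S₁) (s₂ : S₂) (s₃ : S₃) (lam : α) (s₁' : S₁) (s₂' : S₂) (s₃' : S₃),
      (((s₁, s₂), s₃), lam, ((s₁', s₂'), s₃')) ∈
        winskelPar eps zero d (winskelPar eps zero d T₁ T₂) T₃ ↔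
      ((s₁, (s₂, s₃)), lam, (s₁', (s₂', s₃'))) ∈
        winskelPar eps zero d T₁ (winskelPar eps zero d T₂ T₃) := by
  intro s₁ s₂ s₃ lam s₁' s₂' s₃'
  have hT₁e : ∀ p ∈ T₁, p.2.1 ≠ eps := fun p hp => (hT₁ p hp).1
  have hT₂e : ∀ p ∈ T₂, p.2.1 ≠ eps := fun p hp => (hT₂ p hp).1
  have hT₃e : ∀ p ∈ T₃, p.2.1 ≠ eps := fun p hp => (hT₃ p hp).1
  have hP₁₂ : ∀ p ∈ winskelPar eps zero d T₁ T₂, p.2.1 ≠ eps :=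
    fun p hp => (winskelPar_labels heps hT₁e hT₂e p hp).1
  have hP₂₃ : ∀ p ∈ winskelPar eps zero d T₂ T₃, p.2.1 ≠ eps :=
    fun p hp => (winskelPar_labels heps hT₂e hT₃e p hp).1
  rw [mem_winskelPar_iff heps hP₁₂ hT₃e, mem_winskelPar_iff heps hT₁e hP₂₃]
  constructor
  · rintro ⟨hl, ab, c, hlam, hnz, hAB, hC⟩
    obtain ⟨a, b, rfl, hab, hA, hB⟩ :=
      (pair_mem_iff hne heps hT₁e hT₂e s₁ s₁' s₂ s₂' ab).mp hAB
    have hbc : d b c ≠ zero := by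
      intro h
      apply hnz
      rw [hassoc, h, hzero]
    refine ⟨hl, a, d b c, hlam.trans (hassoc a b c), ?_, hA, ?_⟩
    · rw [← hassoc]; exact hnz
    · exact (pair_mem_iff hne heps hT₂e hT₃e s₂ s₂' s₃ s₃' (d b c)).mpr
        ⟨b, c, rfl, hbc, hB, hC⟩
  · rintro ⟨hl, a, bc, hlam, hnz, hA, hBC⟩
    obtain ⟨b, c, rfl, hbc, hB, hC⟩ :=
      (pair_mem_iff hne heps hT₂e hT₃e s₂ s₂' s₃ s₃' bc).mp hBC
    have hab : d a b ≠ zero := by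
      intro h
      apply hnz
      rw [← hassoc, h, hcomm, hzero]
    refine ⟨hl, d a b, c, hlam.trans (hassoc a b c).symm, ?_, ?_, hC⟩
    · rw [hassoc]; exact hnz
    · exact (pair_mem_iff hne heps hT₁e hT₂e s₁ s₁' s₂ s₂' (d a b)).mpr
        ⟨a, b, rfl, hab, hA, hB⟩
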